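/- arXiv:1703.07494 — 2 statements merged into one kernel-verified Lean document; each statement's English description precedes it below -/
import Mathlib

section
/- Weak duality bound: if (v, w) is feasible for the dual LP (D) and μ₀ is the measure of initial conditions whose trajectories reach X_T × Θ at time T, then ⟨λ_x ⊗ λ_θ, w⟩ ≥ μ₀(X × Θ). In particular any dual feasible w satisfies ∫ w d(λ_x ⊗ λ_θ) ≥ (λ_x ⊗ λ_θ)(S), where S is the set of successful initial conditions. -/
/-!
On a successful initial condition `(x₀, θ)`, the function `t ↦ v (t, γ t, θ)` is antitone on
`[0, T]` because its derivative is the Lie derivative `L_f v ≤ 0`, so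
`w (x₀, θ) ≥ 1 + v (0, x₀, θ) ≥ 1 + v (T, γ T, θ) ≥ 1`. Hence `w ≥ 𝟙_S` on `X × Θ`, and integrating
gives the bound.
-/

open MeasureTheory Set

section Trajectory

variable {E P : Type*} [NormedAddCommGroup E] [NormedSpace ℝ E]
  [NormedAddCommGroup P] [NormedSpace ℝ P]

theorem hasDerivAt_comp_prodMk_id_const {v : ℝ × E × P → ℝ} {γ : ℝ → E} {γ' : E} {t : ℝ}
    (θ : P) (hv : DifferentiableAt ℝ v (t, γ t, θ)) (hγ : HasDerivAt γ γ' t) :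
    HasDerivAt (fun s ↦ v (s, γ s, θ)) (fderiv ℝ v (t, γ t, θ) (1, γ', 0)) t :=
  hv.hasFDerivAt.comp_hasDerivAt t <|
    (hasDerivAt_id t).prodMk (hγ.prodMk (hasDerivAt_const t θ))

theorem antitoneOn_comp_prodMk_id_const_of_fderiv_nonpos {v : ℝ × E × P → ℝ}
    (hv : Differentiable ℝ v) {γ γ' : ℝ → E} {a b : ℝ} (θ : P)
    (hγ : ∀ t ∈ Icc a b, HasDerivAt γ (γ' t) t)
    (hLv : ∀ t ∈ Icc a b, fderiv ℝ v (t, γ t, θ) (1, γ' t, 0) ≤ 0) :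
    AntitoneOn (fun t ↦ v (t, γ t, θ)) (Icc a b) := by
  have hderiv : ∀ t ∈ Icc a b,
      HasDerivAt (fun s ↦ v (s, γ s, θ)) (fderiv ℝ v (t, γ t, θ) (1, γ' t, 0)) t :=
    fun t ht ↦ hasDerivAt_comp_prodMk_id_const θ (hv _) (hγ t ht)
  refine antitoneOn_of_hasDerivWithinAt_nonpos (convex_Icc a b)
    (fun t ht ↦ (hderiv t ht).continuousAt.continuousWithinAt)
    (fun t ht ↦ (hderiv t (interior_subset ht)).hasDerivWithinAt)
    (fun t ht ↦ hLv t (interior_subset ht))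

end Trajectory

theorem measureReal_le_setIntegral_of_one_le {α : Type*} [MeasurableSpace α] {μ : Measure α}
    {S s : Set α} {w : α → ℝ} (hSs : S ⊆ s) (hS : MeasurableSet S) (hs : MeasurableSet s)
    (hSfin : μ S ≠ ⊤) (hw : IntegrableOn w s μ) (hw1 : ∀ p ∈ S, 1 ≤ w p)
    (hw0 : ∀ p ∈ s, 0 ≤ w p) :
    μ.real S ≤ ∫ p in s, w p ∂μ :=
  calc μ.real S = ∫ _ in S, (1 : ℝ) ∂μ := by simp
    _ ≤ ∫ p in S, w p ∂μ :=
      setIntegral_mono_on (integrableOn_const hSfin) (hw.mono_set hSs) hS hw1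
    _ ≤ ∫ p in s, w p ∂μ :=
      setIntegral_mono_set hw (ae_restrict_of_forall_mem hs hw0) hSs.eventuallyLE

theorem weak_duality_dual_LP_general {n m : ℕ}
    (T : ℝ) (hT : 0 < T)
    (f : EuclideanSpace ℝ (Fin n) → EuclideanSpace ℝ (Fin m) →
      EuclideanSpace ℝ (Fin n))
    (X : Set (EuclideanSpace ℝ (Fin n))) (hX : IsCompact X)
    (hXmeas : MeasurableSet X)
    (Θ : Set (EuclideanSpace ℝ (Fin m))) (hΘ : IsCompact Θ)
    (hΘmeas : MeasurableSet Θ)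
    (XT : Set (EuclideanSpace ℝ (Fin n)))
    -- trajectories: γ x₀ θ solves ẋ = f(x,θ), starts at x₀, remains in X
    (γ : EuclideanSpace ℝ (Fin n) → EuclideanSpace ℝ (Fin m) → ℝ →
      EuclideanSpace ℝ (Fin n))
    (hγ0 : ∀ x₀ θ, γ x₀ θ 0 = x₀)
    (hγ' : ∀ x₀ θ t, HasDerivAt (γ x₀ θ) (f (γ x₀ θ t) θ) t)
    (hγX : ∀ x₀ ∈ X, ∀ θ ∈ Θ, ∀ t ∈ Set.Icc (0 : ℝ) T, γ x₀ θ t ∈ X)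
    -- S: successful initial conditions
    (S : Set (EuclideanSpace ℝ (Fin n) × EuclideanSpace ℝ (Fin m)))
    (hS : S = {p | p.1 ∈ X ∧ p.2 ∈ Θ ∧ γ p.1 p.2 T ∈ XT})
    (hSmeas : MeasurableSet S)
    -- dual feasibility of (v, w)
    (v : ℝ × EuclideanSpace ℝ (Fin n) × EuclideanSpace ℝ (Fin m) → ℝ)
    (hv : ContDiff ℝ 1 v)
    (w : EuclideanSpace ℝ (Fin n) × EuclideanSpace ℝ (Fin m) → ℝ)
    (hw : Continuous w)
    (hLf : ∀ t ∈ Set.Icc (0 : ℝ) T, ∀ x ∈ X, ∀ θ ∈ Θ,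
      fderiv ℝ v (t, x, θ) (1, f x θ, 0) ≤ 0)
    (hw0 : ∀ x ∈ X, ∀ θ ∈ Θ, 0 ≤ w (x, θ))
    (hwv : ∀ x ∈ X, ∀ θ ∈ Θ, 1 ≤ w (x, θ) - v (0, x, θ))
    (hvT : ∀ x ∈ XT, ∀ θ ∈ Θ, 0 ≤ v (T, x, θ)) :
    (volume S).toReal ≤ ∫ p in X ×ˢ Θ, w p := by
  have hSsub : S ⊆ X ×ˢ Θ := by
    rw [hS]
    exact fun p hp ↦ ⟨hp.1, hp.2.1⟩
  have hw1 : ∀ p ∈ S, 1 ≤ w p := by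
    rintro ⟨x₀, θ⟩ hp
    obtain ⟨hx₀, hθ, hxT⟩ : x₀ ∈ X ∧ θ ∈ Θ ∧ γ x₀ θ T ∈ XT := by rwa [hS] at hp
    have hanti := antitoneOn_comp_prodMk_id_const_of_fderiv_nonpos
      (hv.differentiable one_ne_zero) θ (fun t _ ↦ hγ' x₀ θ t)
      (fun t ht ↦ hLf t ht _ (hγX x₀ hx₀ θ hθ t ht) θ hθ)
    have hdecr := hanti (left_mem_Icc.2 hT.le) (right_mem_Icc.2 hT.le) hT.le
    simp only [hγ0] at hdecr
    linarith [hwv x₀ hx₀ θ hθ, hvT _ hxT θ hθ]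
  have hXΘ := hX.prod hΘ
  exact measureReal_le_setIntegral_of_one_le hSsub hSmeas (hXmeas.prod hΘmeas)
    ((measure_mono hSsub).trans_lt hXΘ.measure_lt_top).ne
    (hw.continuousOn.integrableOn_compact hXΘ) hw1 (fun p hp ↦ hw0 p.1 hp.1 p.2 hp.2)

/-- Weak duality: if (v,w) is feasible for the dual LP (D), then the Lebesgue
pairing ⟨λ_x ⊗ λ_θ, w⟩ bounds from above the Lebesgue measure of the set S of
successful initial conditions (those whose trajectories reach X_T at time T
while remaining in X). -/
theorem weak_duality_dual_LP {n m : ℕ}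
    (T : ℝ) (hT : 0 < T)
    (f : EuclideanSpace ℝ (Fin n) → EuclideanSpace ℝ (Fin m) →
      EuclideanSpace ℝ (Fin n))
    (X : Set (EuclideanSpace ℝ (Fin n))) (hX : IsCompact X)
    (hXmeas : MeasurableSet X)
    (Θ : Set (EuclideanSpace ℝ (Fin m))) (hΘ : IsCompact Θ)
    (hΘmeas : MeasurableSet Θ)
    (XT : Set (EuclideanSpace ℝ (Fin n))) (hXT : XT ⊆ X)
    -- trajectories: γ x₀ θ solves ẋ = f(x,θ), starts at x₀, remains in X
    (γ : EuclideanSpace ℝ (Fin n) → EuclideanSpace ℝ (Fin m) → ℝ →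
      EuclideanSpace ℝ (Fin n))
    (hγ0 : ∀ x₀ θ, γ x₀ θ 0 = x₀)
    (hγ' : ∀ x₀ θ t, HasDerivAt (γ x₀ θ) (f (γ x₀ θ t) θ) t)
    (hγX : ∀ x₀ ∈ X, ∀ θ ∈ Θ, ∀ t ∈ Set.Icc (0 : ℝ) T, γ x₀ θ t ∈ X)
    -- S: successful initial conditions
    (S : Set (EuclideanSpace ℝ (Fin n) × EuclideanSpace ℝ (Fin m)))
    (hS : S = {p | p.1 ∈ X ∧ p.2 ∈ Θ ∧ γ p.1 p.2 T ∈ XT})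
    (hSmeas : MeasurableSet S)
    -- dual feasibility of (v, w)
    (v : ℝ × EuclideanSpace ℝ (Fin n) × EuclideanSpace ℝ (Fin m) → ℝ)
    (hv : ContDiff ℝ 1 v)
    (w : EuclideanSpace ℝ (Fin n) × EuclideanSpace ℝ (Fin m) → ℝ)
    (hw : Continuous w)
    (hLf : ∀ t ∈ Set.Icc (0 : ℝ) T, ∀ x ∈ X, ∀ θ ∈ Θ,
      fderiv ℝ v (t, x, θ) (1, f x θ, 0) ≤ 0)
    (hw0 : ∀ x ∈ X, ∀ θ ∈ Θ, 0 ≤ w (x, θ))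
    (hwv : ∀ x ∈ X, ∀ θ ∈ Θ, 1 ≤ w (x, θ) - v (0, x, θ))
    (hvT : ∀ x ∈ XT, ∀ θ ∈ Θ, 0 ≤ v (T, x, θ)) :
    (volume S).toReal ≤ ∫ p in X ×ˢ Θ, w p :=
  weak_duality_dual_LP_general T hT f X hX hXmeas Θ hΘ hΘmeas XT γ hγ0 hγ' hγX S hS hSmeas v hv w hw
    hLf hw0 hwv hvT
end

section
/- If (v, w) is dual feasible, then w(x₀, θ) ≥ 1 for every (x₀, θ) such that the trajectory of ẋ = f(x,θ) from x₀ reaches X_T at time T while staying in X; i.e., the 1-superlevel set {w ≥ 1} contains the uncertain backwards reachable set. -/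
/-! Along the trajectory `γ`, the function `t ↦ v (t, γ t, θ)` has derivative the Lie derivative
`∂v/∂t + ∇ₓv · f`, which is nonpositive, so it is antitone on `[0, T]`. Hence
`v (0, x₀, θ) ≥ v (T, γ T, θ) ≥ 0`, and `w (x₀, θ) ≥ v (0, x₀, θ) + 1 ≥ 1`. -/

open Set

section

variable {E F G : Type*} [NormedAddCommGroup E] [NormedSpace ℝ E]
  [NormedAddCommGroup F] [NormedSpace ℝ F] [NormedAddCommGroup G] [NormedSpace ℝ G]

theorem hasDerivAt_comp_time_curve_param {v : ℝ × E × F → G} {γ : ℝ → E} {γ' : E} {t : ℝ}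
    (θ : F) (hv : DifferentiableAt ℝ v (t, γ t, θ)) (hγ : HasDerivAt γ γ' t) :
    HasDerivAt (fun s => v (s, γ s, θ)) (fderiv ℝ v (t, γ t, θ) (1, γ', 0)) t :=
  hv.hasFDerivAt.comp_hasDerivAt t
    ((hasDerivAt_id t).prodMk (hγ.prodMk (hasDerivAt_const t θ)))

theorem antitoneOn_comp_time_curve_param {v : ℝ × E × F → ℝ} (hv : Differentiable ℝ v)
    {γ γ' : ℝ → E} (θ : F) {a b : ℝ} (hγ : ∀ t ∈ Icc a b, HasDerivAt γ (γ' t) t)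
    (hLie : ∀ t ∈ Icc a b, fderiv ℝ v (t, γ t, θ) (1, γ' t, 0) ≤ 0) :
    AntitoneOn (fun t => v (t, γ t, θ)) (Icc a b) := by
  have hderiv : ∀ t ∈ Icc a b,
      HasDerivAt (fun s => v (s, γ s, θ)) (fderiv ℝ v (t, γ t, θ) (1, γ' t, 0)) t :=
    fun t ht => hasDerivAt_comp_time_curve_param θ (hv _) (hγ t ht)
  refine antitoneOn_of_hasDerivWithinAt_nonpos (convex_Icc a b)
    (fun t ht => (hderiv t ht).continuousAt.continuousWithinAt) (fun t ht => ?_)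
    (fun t ht => hLie t (interior_subset ht))
  exact (hderiv t (interior_subset ht)).hasDerivWithinAt

end

open MeasureTheory

theorem dual_feasible_superlevel_contains_BRS_general {n m : ℕ}
    (T : ℝ) (hT : 0 < T)
    (f : EuclideanSpace ℝ (Fin n) → EuclideanSpace ℝ (Fin m) →
      EuclideanSpace ℝ (Fin n))
    (X : Set (EuclideanSpace ℝ (Fin n))) (Θ : Set (EuclideanSpace ℝ (Fin m)))
    (XT : Set (EuclideanSpace ℝ (Fin n)))
    (v : ℝ × EuclideanSpace ℝ (Fin n) × EuclideanSpace ℝ (Fin m) → ℝ)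
    (hv : ContDiff ℝ 1 v)
    (w : EuclideanSpace ℝ (Fin n) × EuclideanSpace ℝ (Fin m) → ℝ)
    (hLf : ∀ t ∈ Set.Icc (0 : ℝ) T, ∀ x ∈ X, ∀ θ ∈ Θ,
      fderiv ℝ v (t, x, θ) (1, f x θ, 0) ≤ 0)
    (hvT : ∀ x ∈ XT, ∀ θ ∈ Θ, 0 ≤ v (T, x, θ))
    (hwv : ∀ x ∈ X, ∀ θ ∈ Θ, v (0, x, θ) + 1 ≤ w (x, θ))
    (x₀ : EuclideanSpace ℝ (Fin n)) (hx₀ : x₀ ∈ X)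
    (θ : EuclideanSpace ℝ (Fin m)) (hθ : θ ∈ Θ)
    (γ : ℝ → EuclideanSpace ℝ (Fin n))
    (hγ0 : γ 0 = x₀)
    (hγ' : ∀ t ∈ Set.Icc (0 : ℝ) T, HasDerivAt γ (f (γ t) θ) t)
    (hγX : ∀ t ∈ Set.Icc (0 : ℝ) T, γ t ∈ X)
    (hγT : γ T ∈ XT) :
    1 ≤ w (x₀, θ) := by
  have hanti : AntitoneOn (fun t => v (t, γ t, θ)) (Icc 0 T) :=
    antitoneOn_comp_time_curve_param (hv.differentiable one_ne_zero) θ hγ'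
      fun t ht => hLf t ht (γ t) (hγX t ht) θ hθ
  have hdecrease : v (T, γ T, θ) ≤ v (0, x₀, θ) := by
    simpa only [hγ0] using
      hanti (left_mem_Icc.2 hT.le) (right_mem_Icc.2 hT.le) hT.le
  linarith [hvT (γ T) hγT θ hθ, hwv x₀ hx₀ θ hθ]

/-- If (v,w) is dual feasible, then w(x₀,θ) ≥ 1 for every (x₀,θ) whose
trajectory of ẋ = f(x,θ) from x₀ reaches X_T at time T while staying in X:
the 1-superlevel set of w contains the uncertain backwards reachable set. -/
theorem dual_feasible_superlevel_contains_BRS {n m : ℕ}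
    (T : ℝ) (hT : 0 < T)
    (f : EuclideanSpace ℝ (Fin n) → EuclideanSpace ℝ (Fin m) →
      EuclideanSpace ℝ (Fin n)) (hf : Continuous fun p : _ × _ => f p.1 p.2)
    (X : Set (EuclideanSpace ℝ (Fin n))) (Θ : Set (EuclideanSpace ℝ (Fin m)))
    (XT : Set (EuclideanSpace ℝ (Fin n))) (hXT : XT ⊆ X)
    (v : ℝ × EuclideanSpace ℝ (Fin n) × EuclideanSpace ℝ (Fin m) → ℝ)
    (hv : ContDiff ℝ 1 v)
    (w : EuclideanSpace ℝ (Fin n) × EuclideanSpace ℝ (Fin m) → ℝ)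
    (hLf : ∀ t ∈ Set.Icc (0 : ℝ) T, ∀ x ∈ X, ∀ θ ∈ Θ,
      fderiv ℝ v (t, x, θ) (1, f x θ, 0) ≤ 0)
    (hvT : ∀ x ∈ XT, ∀ θ ∈ Θ, 0 ≤ v (T, x, θ))
    (hwv : ∀ x ∈ X, ∀ θ ∈ Θ, v (0, x, θ) + 1 ≤ w (x, θ))
    (x₀ : EuclideanSpace ℝ (Fin n)) (hx₀ : x₀ ∈ X)
    (θ : EuclideanSpace ℝ (Fin m)) (hθ : θ ∈ Θ)
    (γ : ℝ → EuclideanSpace ℝ (Fin n))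
    (hγ0 : γ 0 = x₀)
    (hγ' : ∀ t ∈ Set.Icc (0 : ℝ) T, HasDerivAt γ (f (γ t) θ) t)
    (hγX : ∀ t ∈ Set.Icc (0 : ℝ) T, γ t ∈ X)
    (hγT : γ T ∈ XT) :
    1 ≤ w (x₀, θ) :=
  dual_feasible_superlevel_contains_BRS_general T hT f X Θ XT v hv w hLf hvT hwv x₀ hx₀ θ hθ γ hγ0
    hγ' hγX hγT
end
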